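/- Let M be the ℤ-submodule of ℚ generated by the set {1/p : p a prime number}. Then for every prime ideal P of ℤ, the κ(P)-vector space κ(P) ⊗_ℤ M has dimension 1. -/

import Mathlib

open TensorProduct

universe u

/-- `κ(P)`: the residue field of the localization of `R` at the prime `P`. -/
noncomputable abbrev kappa {R : Type u} [CommRing R] (P : Ideal R) [P.IsPrime] : Type u :=
  IsLocalRing.ResidueField (Localization.AtPrime P)

/-- `M`: the `ℤ`-submodule of `ℚ` generated by the reciprocals of the prime numbers. -/
def reciprocalPrimesModule : Submodule ℤ ℚ :=
  Submodule.span ℤ {q : ℚ | ∃ p : ℕ, p.Prime ∧ q = (p : ℚ)⁻¹}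

/-! Let `K` be a field. The elements `1 ⊗ 1/q` span `K ⊗ M`, and since `q • (1/q) = 1 = p • (1/p)`,
each of them is a multiple of `1 ⊗ 1/p` as soon as `q` is invertible in `K`. Taking for `p` the
characteristic of `K` (or `p = 2` in characteristic zero), `1 ⊗ 1/p` therefore spans. It is nonzero
because some `ℤ`-linear `g : M → K` has `g (1/p) ≠ 0`: in characteristic zero the inclusion
`M ⊆ ℚ ⊆ K`, and in characteristic `p` the map `x ↦ p x mod p`, which makes sense because
`p • M ⊆ ℤ_[p]`. -/

open Submodule

theorem rank_baseChange_eq_one {R K M : Type*} [CommRing R] [Field K] [Algebra R K]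
    [AddCommGroup M] [Module R M] {s : Set M} (hs : span R s = ⊤) (m₀ : M) (g : M →ₗ[R] K)
    (hg : g m₀ ≠ 0) (hsm₀ : ∀ m ∈ s, (1 : K) ⊗ₜ[R] m ∈ K ∙ ((1 : K) ⊗ₜ[R] m₀)) :
    Module.rank K (K ⊗[R] M) = 1 := by
  have hne : (1 : K) ⊗ₜ[R] m₀ ≠ 0 := fun h ↦ hg <| by
    simpa using congrArg (g.liftBaseChange K) h
  have htop : K ∙ ((1 : K) ⊗ₜ[R] m₀) = ⊤ := by
    rw [eq_top_iff, ← baseChange_top, ← hs, baseChange_span, span_le]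
    rintro _ ⟨m, hm, rfl⟩
    exact hsm₀ m hm
  exact rank_eq_one _ hne fun w ↦ mem_span_singleton.mp (htop ▸ mem_top)

namespace reciprocalPrimesModule

def invPrime {p : ℕ} (hp : p.Prime) : reciprocalPrimesModule :=
  ⟨(p : ℚ)⁻¹, subset_span ⟨p, hp, rfl⟩⟩

lemma nsmul_invPrime {p q : ℕ} (hp : p.Prime) (hq : q.Prime) :
    q • invPrime hq = p • invPrime hp := by
  ext
  simp [invPrime, hp.ne_zero, hq.ne_zero]

lemma one_tmul_invPrime_mem_span {K : Type*} [Field K] {p q : ℕ} (hp : p.Prime)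
    (hq : q.Prime) (hqK : (q : K) ≠ 0) :
    (1 : K) ⊗ₜ[ℤ] invPrime hq ∈ K ∙ ((1 : K) ⊗ₜ[ℤ] invPrime hp) := by
  have key : (q : K) • (1 : K) ⊗ₜ[ℤ] invPrime hq = (p : K) • (1 : K) ⊗ₜ[ℤ] invPrime hp := by
    rw [Nat.cast_smul_eq_nsmul, Nat.cast_smul_eq_nsmul, ← tmul_smul, ← tmul_smul,
      nsmul_invPrime hp hq]
  rw [← inv_smul_smul₀ hqK ((1 : K) ⊗ₜ[ℤ] invPrime hq), key, smul_smul]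
  exact smul_mem _ _ (mem_span_singleton_self _)

theorem rank_tensor_eq_one_of_prime {K : Type*} [Field K] {p : ℕ} (hp : p.Prime)
    (g : reciprocalPrimesModule →ₗ[ℤ] K) (hg : g (invPrime hp) ≠ 0)
    (hK : ∀ q : ℕ, q.Prime → (q : K) = 0 → q = p) :
    Module.rank K (K ⊗[ℤ] reciprocalPrimesModule) = 1 := by
  refine rank_baseChange_eq_one span_span_coe_preimage _ g hg ?_
  rintro m ⟨q, hq, hmq⟩
  obtain rfl : m = invPrime hq := Subtype.ext hmq
  by_cases hqK : (q : K) = 0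
  · obtain rfl := hK q hq hqK
    exact mem_span_singleton_self _
  · exact one_tmul_invPrime_mem_span hp hq hqK

lemma norm_natCast_mul_le_one (p : ℕ) [Fact p.Prime] {x : ℚ} (hx : x ∈ reciprocalPrimesModule) :
    ‖((p * x : ℚ) : ℚ_[p])‖ ≤ 1 := by
  induction hx using span_induction with
  | mem x hx =>
    obtain ⟨q, hq, rfl⟩ := hx
    by_cases hqp : q = p
    · subst hqp
      simp [(Fact.out : q.Prime).ne_zero]
    · have hcop : p.Coprime q := (Nat.coprime_primes Fact.out hq).mpr (Ne.symm hqp)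
      push_cast
      rw [norm_mul, norm_inv, Padic.norm_natCast_eq_one_iff.mpr hcop, inv_one, mul_one]
      exact Padic.norm_int_le_one (p : ℤ)
  | zero => simp
  | add x y _ _ hx hy =>
    push_cast at hx hy ⊢
    rw [mul_add]
    exact (Padic.nonarchimedean _ _).trans (max_le hx hy)
  | smul n x _ hx =>
    rw [zsmul_eq_mul]
    push_cast at hx ⊢
    rw [mul_left_comm, norm_mul]
    exact mul_le_one₀ (Padic.norm_int_le_one n) (norm_nonneg _) hx

noncomputable def mulToPadicInt (p : ℕ) [Fact p.Prime] : reciprocalPrimesModule →+ ℤ_[p] where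
  toFun x := (⟨((p * x : ℚ) : ℚ_[p]), norm_natCast_mul_le_one p x.2⟩ : ℤ_[p])
  map_zero' := PadicInt.ext (by simp)
  map_add' x y := PadicInt.ext <|
    show ((p * ((x + y : reciprocalPrimesModule) : ℚ) : ℚ) : ℚ_[p]) = _ + _ by push_cast; ring

lemma mulToPadicInt_invPrime (p : ℕ) [hp : Fact p.Prime] :
    mulToPadicInt p (invPrime hp.out) = 1 :=
  PadicInt.ext <| show ((p * (p : ℚ)⁻¹ : ℚ) : ℚ_[p]) = 1 by simp [hp.out.ne_zero]

theorem rank_tensor_eq_one_of_charP (K : Type*) [Field K] (p : ℕ) [hp : Fact p.Prime]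
    [CharP K p] : Module.rank K (K ⊗[ℤ] reciprocalPrimesModule) = 1 := by
  let g := ((ZMod.castHom dvd_rfl K).comp PadicInt.toZMod).toAddMonoidHom.comp (mulToPadicInt p)
  refine rank_tensor_eq_one_of_prime hp.out g.toIntLinearMap ?_ fun q hq hqK ↦ ?_
  · simp [g, mulToPadicInt_invPrime]
  · exact ((Nat.prime_dvd_prime_iff_eq hp.out hq).mp ((CharP.cast_eq_zero_iff K p q).mp hqK)).symm

theorem rank_tensor_eq_one_of_charZero (K : Type*) [Field K] [CharZero K] :
    Module.rank K (K ⊗[ℤ] reciprocalPrimesModule) = 1 := by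
  refine rank_tensor_eq_one_of_prime Nat.prime_two
    ((algebraMap ℚ K).toAddMonoidHom.toIntLinearMap ∘ₗ reciprocalPrimesModule.subtype) ?_
    fun q hq hqK ↦ absurd (Nat.cast_eq_zero.mp hqK) hq.ne_zero
  simp [invPrime]

theorem rank_tensor_eq_one (K : Type*) [Field K] :
    Module.rank K (K ⊗[ℤ] reciprocalPrimesModule) = 1 := by
  rcases CharP.exists' K with _ | ⟨p, _, _⟩
  · exact rank_tensor_eq_one_of_charZero K
  · exact rank_tensor_eq_one_of_charP K p

end reciprocalPrimesModule

/-- Let `M ⊆ ℚ` be the `ℤ`-submodule generated by `{1/p : p prime}`.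
For every prime ideal `P` of `ℤ`, the `κ(P)`-vector space `κ(P) ⊗[ℤ] M` has
dimension `1`. -/
theorem stmt_17 (P : Ideal ℤ) [P.IsPrime] :
    Module.rank (kappa P) (kappa P ⊗[ℤ] reciprocalPrimesModule) = 1 :=
  reciprocalPrimesModule.rank_tensor_eq_one (kappa P)
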